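/- arXiv:1906.01521 — 6 statements merged into one kernel-verified Lean document; each statement's English description precedes it below -/
import Mathlib

section
/- Let A be a finite alphabet, S a semigroup generated by the images of A, and L ⊆ A⁺ a rational (regular) dictionary of S such that the relation R_ε^L = {(u,v) ∈ L × L : p(u) = p(v)} is rational. Then there exist k ∈ ℕ, a rational dictionary K ⊆ L of S, a finite alphabet B, a regular language H ⊆ B*, and a Nivat bimorphism (α, β) from B* to A* such that {(α(w), β(w)) : w ∈ H} = R_ε^K = {(u,v) ∈ K × K : p(u) = p(v)}, and for all x, f, s ∈ B* with x·f·s ∈ H and |f| > k, both α(f) ≠ ε and β(f) ≠ ε. -/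
/-- Extension of a letter map `B → A*` to the induced monoid map `B* → A*`. -/
def strMap {B A : Type} (α : B → List A) (w : List B) : List A :=
  (w.map α).flatten

/-- A Nivat bimorphism: for each letter `b`, exactly one of `α b`, `β b` is the
empty word, and the other is a single letter. -/
def NivatPair {B A : Type} (α β : B → List A) : Prop :=
  ∀ b : B, (α b = [] ∧ (β b).length = 1) ∨ ((α b).length = 1 ∧ β b = [])

/-- Evaluation of a word over `A` in a semigroup `S` (via the one-point
monoid extension `WithOne S`; nonempty words evaluate in `S` itself). -/
def evalW {A S : Type} [Semigroup S] (f : A → S) (w : List A) : WithOne S :=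
  (w.map fun a => (f a : WithOne S)).prod

/-- A relation on words over `A` is rational if it is the image of a regular
language under a Nivat bimorphism. -/
def IsRationalRel {A : Type} (R : Set (List A × List A)) : Prop :=
  ∃ (B : Type) (_ : Fintype B) (H : Language B), H.IsRegular ∧
    ∃ α β : B → List A, NivatPair α β ∧
      R = {uv | ∃ w ∈ H, uv = (strMap α w, strMap β w)}

/-!
Let `(α, β)` present `R_ε^L` on a regular `H ⊆ B*`, and let `N` be a pumping constant of `H`.
If `w ∈ H` has a factor of length `N` erased by `α`, pumping it down yields a word of `H` with
the same `α`-side and a strictly shorter `β`-side, which is again a word of `L` of the same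
value. Hence removing from `L` all such `β`-sides, and symmetrically all such `α`-sides, leaves
a dictionary `K`; it is regular because images under morphisms sending letters to words of
length at most one, inverse images under morphisms, and the words containing a long erased
factor are regular. Restricting `H` to the words with both sides in `K` presents `R_ε^K`, and
by construction none of its words has a factor of length `N` erased by `α` or by `β`.
-/

section Words

variable {A B : Type}

@[simp]
theorem strMap_cons (α : B → List A) (b : B) (w : List B) :
    strMap α (b :: w) = α b ++ strMap α w := by
  simp [strMap]

@[simp]
theorem strMap_append (α : B → List A) (u v : List B) :
    strMap α (u ++ v) = strMap α u ++ strMap α v := by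
  simp [strMap]

theorem strMap_eq_nil_iff {α : B → List A} {w : List B} :
    strMap α w = [] ↔ ∀ b ∈ w, α b = [] := by
  simp [strMap, List.flatten_eq_nil_iff]

theorem List.Sublist.strMap_eq_nil {α : B → List A} {g g' : List B} (hg' : g'.Sublist g)
    (hg : strMap α g = []) : strMap α g' = [] :=
  strMap_eq_nil_iff.2 fun b hb => strMap_eq_nil_iff.1 hg b (hg'.subset hb)

theorem exists_eq_append_of_strMap_eq_append {β : B → List A} (hβ : ∀ b, (β b).length ≤ 1)
    {w : List B} {u v : List A} (h : strMap β w = u ++ v) :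
    ∃ z z', w = z ++ z' ∧ strMap β z = u ∧ strMap β z' = v := by
  induction w generalizing u with
  | nil =>
    obtain ⟨rfl, rfl⟩ := List.append_eq_nil_iff.1 h.symm
    exact ⟨[], [], rfl, rfl, rfl⟩
  | cons b w ih =>
    rcases u with _ | ⟨a, u⟩
    · exact ⟨[], b :: w, rfl, rfl, h⟩
    rw [strMap_cons] at h
    have hb := hβ b
    match hβb : β b with
    | [] =>
      rw [hβb, List.nil_append] at h
      obtain ⟨z, z', rfl, hz, hz'⟩ := ih h
      exact ⟨b :: z, z', rfl, by simp [hβb, hz], hz'⟩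
    | [c] =>
      rw [hβb, List.cons_append, List.cons_append, List.nil_append, List.cons.injEq] at h
      obtain ⟨z, z', rfl, hz, hz'⟩ := ih h.2
      exact ⟨b :: z, z', rfl, by simp [hβb, hz, h.1], hz'⟩
    | _ :: _ :: _ => simp [hβb] at hb

end Words

namespace NivatPair

variable {A B : Type} {α β : B → List A}

theorem symm (h : NivatPair α β) : NivatPair β α :=
  fun b => (h b).symm.imp And.symm And.symm

theorem length_right_le_one (h : NivatPair α β) (b : B) : (β b).length ≤ 1 := by
  rcases h b with ⟨-, hb⟩ | ⟨-, hb⟩ <;> simp [hb]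

theorem length_right_eq_one (h : NivatPair α β) {b : B} (hb : α b = []) : (β b).length = 1 := by
  rcases h b with ⟨-, h1⟩ | ⟨h1, -⟩
  · exact h1
  · simp [hb] at h1

theorem length_strMap_right (h : NivatPair α β) {g : List B} (hg : strMap α g = []) :
    (strMap β g).length = g.length := by
  induction g with
  | nil => rfl
  | cons b g ih =>
    rw [strMap_cons, List.append_eq_nil_iff] at hg
    simp [h.length_right_eq_one hg.1, ih hg.2, add_comm]

end NivatPair

section Regular

variable {A B : Type}

theorem Language.IsRegular.preimage_strMap {L : Language A} (hL : L.IsRegular)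
    (α : B → List A) : Language.IsRegular {w : List B | strMap α w ∈ L} := by
  refine .of_finite_range_leftQuotient <|
    (hL.finite_range_leftQuotient.image fun Q => {w : List B | strMap α w ∈ Q}).subset ?_
  rintro _ ⟨x, rfl⟩
  refine ⟨_, ⟨strMap α x, rfl⟩, ?_⟩
  ext w
  show strMap α x ++ strMap α w ∈ L ↔ strMap α (x ++ w) ∈ L
  rw [strMap_append]

/-- The left quotient of the image by `u` is determined by the left quotients of `L` by the
preimages of `u`. -/
theorem Language.IsRegular.image_strMap {L : Language B} (hL : L.IsRegular)
    {β : B → List A} (hβ : ∀ b, (β b).length ≤ 1) :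
    Language.IsRegular (strMap β '' L) := by
  refine .of_finite_range_leftQuotient <|
    (hL.finite_range_leftQuotient.finite_subsets.image
      fun 𝒬 => {v | ∃ Q ∈ 𝒬, ∃ z ∈ Q, strMap β z = v}).subset ?_
  rintro _ ⟨u, rfl⟩
  refine ⟨L.leftQuotient '' {z | strMap β z = u}, Set.image_subset_range _ _, ?_⟩
  ext v
  simp only [Set.mem_ofPred_eq, Set.mem_image]
  constructor
  · rintro ⟨_, ⟨z, hz, rfl⟩, z', hz', rfl⟩
    exact ⟨z ++ z', hz', by simp [hz]⟩
  · rintro ⟨w, hw, h⟩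
    obtain ⟨z, z', rfl, hz, hz'⟩ := exists_eq_append_of_strMap_eq_append hβ h
    exact ⟨_, ⟨z, hz, rfl⟩, z', hw, hz'⟩

end Regular

section Infix

variable {B : Type}

theorem exists_infix_drop_append_of_exists_infix_append {P : List B → Prop} {n : ℕ}
    (hP : ∀ g, P g → g.length ≤ n) {x y : List B} (hx : ∀ g, P g → ¬ g <:+: x)
    (h : ∃ g, P g ∧ g <:+: x ++ y) : ∃ g, P g ∧ g <:+: x.drop (x.length - n) ++ y := by
  obtain ⟨g, hg, s, t, hst⟩ := h
  refine ⟨g, hg, ?_⟩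
  have hsx : x.length - n ≤ s.length := by
    by_contra! hlt
    have : s ++ g <+: x :=
      List.prefix_of_prefix_length_le ⟨t, hst⟩ (List.prefix_append x y)
        (by have := hP g hg; rw [List.length_append]; omega)
    exact hx g hg ((List.infix_append s g []).trans (by simpa using this.isInfix))
  obtain ⟨s', rfl⟩ : x.take (x.length - n) <+: s :=
    List.prefix_of_prefix_length_le ((List.take_prefix _ x).trans (List.prefix_append x y))
      ⟨g ++ t, by simpa using hst⟩ (by simpa using hsx)
  refine ⟨s', t, ?_⟩
  rw [← List.take_append_drop (x.length - n) x, List.append_assoc, List.append_assoc,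
    List.append_assoc] at hst
  simpa using hst

/-- The left quotient by `x` is `⊤` if `x` has an infix satisfying `P`, and otherwise depends
only on the last `n` letters of `x`. -/
theorem Language.isRegular_setOf_exists_infix [Finite B] {P : List B → Prop} {n : ℕ}
    (hP : ∀ g, P g → g.length ≤ n) :
    Language.IsRegular {w : List B | ∃ g, P g ∧ g <:+: w} := by
  set I : Language B := {w : List B | ∃ g, P g ∧ g <:+: w}
  refine .of_finite_range_leftQuotient <|
    (((List.finite_length_le B n).image I.leftQuotient).insert ⊤).subset ?_
  rintro _ ⟨x, rfl⟩
  by_cases hx : ∃ g, P g ∧ g <:+: x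
  · left
    obtain ⟨g, hg, hgx⟩ := hx
    exact eq_top_iff.2 fun y _ => ⟨g, hg, hgx.trans (List.prefix_append x y).isInfix⟩
  · right
    refine ⟨x.drop (x.length - n), by rw [Set.mem_ofPred_eq, List.length_drop]; omega, ?_⟩
    ext y
    simp only [Language.mem_leftQuotient]
    constructor
    · have hsuffix : x.drop (x.length - n) ++ y <:+ x ++ y :=
        ⟨x.take (x.length - n), by rw [← List.append_assoc, List.take_append_drop]⟩
      exact fun ⟨g, hg, hgy⟩ => ⟨g, hg, hgy.trans hsuffix.isInfix⟩
    · exact exists_infix_drop_append_of_exists_infix_append hP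
        fun g hg hgx => hx ⟨g, hg, hgx⟩

end Infix

def Language.PumpsDown {B : Type} (H : Language B) (N : ℕ) : Prop :=
  ∀ x g y, x ++ g ++ y ∈ H → N ≤ g.length →
    ∃ g', g'.Sublist g ∧ g'.length < g.length ∧ x ++ g' ++ y ∈ H

theorem Language.IsRegular.exists_pumpsDown {B : Type} {H : Language B} (hH : H.IsRegular) :
    ∃ N, H.PumpsDown N := by
  obtain ⟨σ, _, M, rfl⟩ := hH
  refine ⟨Fintype.card σ, fun x g y hw hN => ?_⟩
  obtain ⟨q, g₁, g₂, g₃, rfl, -, hg₂, hq, hloop, hq₃⟩ :=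
    M.evalFrom_split (s := M.eval x) hN rfl
  refine ⟨g₁ ++ g₃, (List.sublist_append_left g₁ g₂).append_right g₃,
    by simp [List.length_pos_iff.2 hg₂], ?_⟩
  have eval_eq (z : List B) : M.eval (x ++ z ++ y) = M.evalFrom (M.evalFrom (M.eval x) z) y := by
    simp only [DFA.eval, DFA.evalFrom_of_append]
  rw [DFA.mem_accepts, eval_eq] at hw ⊢
  simpa only [DFA.evalFrom_of_append, hq, hloop] using hw

section Dictionary

variable {A B X : Type}

def sameValueRel (e : List A → X) (L : Language A) : Set (List A × List A) :=
  {uv | uv.1 ∈ L ∧ uv.2 ∈ L ∧ e uv.1 = e uv.2}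

def nivatImage (α β : B → List A) (H : Language B) : Set (List A × List A) :=
  {uv | ∃ w ∈ H, uv = (strMap α w, strMap β w)}

def withErasedInfix (α : B → List A) (n : ℕ) : Language B :=
  {w | ∃ g, (g.length = n ∧ strMap α g = []) ∧ g <:+: w}

theorem isRegular_withErasedInfix [Finite B] (α : B → List A) (n : ℕ) :
    (withErasedInfix α n).IsRegular :=
  Language.isRegular_setOf_exists_infix fun _ hg => hg.1.le

theorem mem_withErasedInfix_of_infix {α : B → List A} {n : ℕ} {g w : List B}
    (hgw : g <:+: w) (hn : n ≤ g.length) (hg : strMap α g = []) : w ∈ withErasedInfix α n :=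
  ⟨g.take n, ⟨by simp [hn], (List.take_sublist n g).strMap_eq_nil hg⟩,
    (List.take_prefix n g).isInfix.trans hgw⟩

/-- Pumping down the erased factor shortens the `β`-side and keeps the `α`-side. -/
def shrinkable (α β : B → List A) (H : Language B) (n : ℕ) : Language A :=
  strMap β '' (H ⊓ withErasedInfix α n)

variable {α β : B → List A} {H : Language B} {e : List A → X} {L : Language A} {N : ℕ}

theorem isRegular_shrinkable [Finite B] (hNiv : NivatPair α β) (hH : H.IsRegular) (n : ℕ) :
    (shrinkable α β H n).IsRegular :=
  (hH.inf (isRegular_withErasedInfix α n)).image_strMap hNiv.length_right_le_one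

theorem nivatImage_swap_subset (h : nivatImage α β H ⊆ sameValueRel e L) :
    nivatImage β α H ⊆ sameValueRel e L := by
  rintro _ ⟨w, hw, rfl⟩
  obtain ⟨hα, hβ, he⟩ := h ⟨w, hw, rfl⟩
  exact ⟨hβ, hα, he.symm⟩

theorem exists_shorter_of_mem_shrinkable (hNiv : NivatPair α β)
    (hR : nivatImage α β H ⊆ sameValueRel e L) (hN : H.PumpsDown N) {v : List A}
    (hv : v ∈ shrinkable α β H N) : ∃ v' ∈ L, v'.length < v.length ∧ e v' = e v := by
  obtain ⟨w, ⟨hw, g, ⟨hgN, hg⟩, x, y, rfl⟩, rfl⟩ := hv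
  obtain ⟨g', hg'g, hlt, hw'⟩ := hN x g y hw hgN.ge
  have hg' := hg'g.strMap_eq_nil hg
  obtain ⟨-, hβ', he'⟩ := hR ⟨_, hw', rfl⟩
  obtain ⟨-, -, he⟩ := hR ⟨_, hw, rfl⟩
  refine ⟨_, hβ', ?_, ?_⟩
  · simp only [strMap_append, List.length_append, hNiv.length_strMap_right hg,
      hNiv.length_strMap_right hg']
    omega
  · rw [← he', ← he]
    simp [hg, hg']

theorem exists_mem_inf_compl_of_exists_shorter {S : Language A}
    (h : ∀ u ∈ L, u ∈ S → ∃ u' ∈ L, u'.length < u.length ∧ e u' = e u) {u : List A}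
    (hu : u ∈ L) : ∃ v ∈ L ⊓ Sᶜ, e v = e u := by
  induction hn : u.length using Nat.strong_induction_on generalizing u with
  | _ n ih =>
    by_cases huS : u ∈ S
    · obtain ⟨u', hu', hlt, he⟩ := h u hu huS
      obtain ⟨v, hv, hve⟩ := ih _ (hn ▸ hlt) hu' rfl
      exact ⟨v, hv, hve.trans he⟩
    · exact ⟨u, ⟨hu, huS⟩, rfl⟩

theorem nivatImage_restrict (hR : nivatImage α β H = sameValueRel e L) {K : Language A}
    (hK : K ≤ L) :
    nivatImage α β (H ⊓ {w | strMap α w ∈ K} ⊓ {w | strMap β w ∈ K}) =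
      sameValueRel e K := by
  ext ⟨u, v⟩
  constructor
  · rintro ⟨w, ⟨⟨hw, hα⟩, hβ⟩, h⟩
    obtain ⟨rfl, rfl⟩ := Prod.mk.inj h
    exact ⟨hα, hβ, (hR.subset ⟨w, hw, rfl⟩).2.2⟩
  · rintro ⟨hu, hv, he⟩
    obtain ⟨w, hw, h⟩ := hR.superset ⟨hK hu, hK hv, he⟩
    obtain ⟨rfl, rfl⟩ := Prod.mk.inj h
    exact ⟨w, ⟨⟨hw, hu⟩, hv⟩, rfl⟩

theorem strMap_ne_nil_of_notMem_shrinkable {w : List B} (hw : w ∈ H)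
    (hβw : strMap β w ∉ shrinkable α β H N) {x g y : List B} (h : x ++ g ++ y = w)
    (hg : N ≤ g.length) : strMap α g ≠ [] :=
  fun hα => hβw ⟨w, ⟨hw, mem_withErasedInfix_of_infix ⟨x, y, h⟩ hg hα⟩, rfl⟩

end Dictionary

theorem stmt0_general {A S : Type} [Semigroup S] (f : A → S)
    (L : Language A) (hLreg : L.IsRegular)
    (hLdict : ∀ s : S, ∃ w ∈ L, evalW f w = (s : WithOne S))
    (hLrat : IsRationalRel
      {uv : List A × List A | uv.1 ∈ L ∧ uv.2 ∈ L ∧ evalW f uv.1 = evalW f uv.2}) :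
    ∃ (k : ℕ) (K : Language A), K ≤ L ∧ K.IsRegular ∧
      (∀ s : S, ∃ w ∈ K, evalW f w = (s : WithOne S)) ∧
      ∃ (B : Type) (_ : Fintype B) (H : Language B), H.IsRegular ∧
        ∃ α β : B → List A, NivatPair α β ∧
          {uv : List A × List A | ∃ w ∈ H, uv = (strMap α w, strMap β w)} =
            {uv : List A × List A | uv.1 ∈ K ∧ uv.2 ∈ K ∧ evalW f uv.1 = evalW f uv.2} ∧
          ∀ x g s : List B, x ++ g ++ s ∈ H → g.length > k →
            strMap α g ≠ [] ∧ strMap β g ≠ [] := by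
  obtain ⟨B, _, H, hHreg, α, β, hNiv, hR⟩ := hLrat
  obtain ⟨N, hN⟩ := hHreg.exists_pumpsDown
  have hR' : nivatImage α β H = sameValueRel (evalW f) L := hR.symm
  set K := L ⊓ (shrinkable α β H N + shrinkable β α H N)ᶜ
  have hKreg : K.IsRegular := hLreg.inf ((isRegular_shrinkable hNiv hHreg N).add
    (isRegular_shrinkable hNiv.symm hHreg N)).compl
  refine ⟨N, K, inf_le_left, hKreg, fun s => ?_, B, inferInstance, _,
    (hHreg.inf (hKreg.preimage_strMap α)).inf (hKreg.preimage_strMap β), α, β, hNiv,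
    nivatImage_restrict hR' inf_le_left, fun x g y hw hg => ?_⟩
  · obtain ⟨u, hu, hus⟩ := hLdict s
    obtain ⟨v, hv, hvu⟩ := exists_mem_inf_compl_of_exists_shorter (fun u _ hu => Or.elim hu
      (exists_shorter_of_mem_shrinkable hNiv hR'.subset hN)
      (exists_shorter_of_mem_shrinkable hNiv.symm (nivatImage_swap_subset hR'.subset) hN)) hu
    exact ⟨v, hv, hvu.trans hus⟩
  · obtain ⟨⟨hw, hαK⟩, hβK⟩ := hw
    exact ⟨strMap_ne_nil_of_notMem_shrinkable hw (fun h => hβK.2 (Or.inl h)) rfl hg.le,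
      strMap_ne_nil_of_notMem_shrinkable hw (fun h => hαK.2 (Or.inr h)) rfl hg.le⟩

/-- If `L` is a rational dictionary of a semigroup `S`
whose relation `R_ε^L` is rational, then there are `k`, a rational dictionary
`K ⊆ L`, and a regular language `H` with a Nivat bimorphism realizing `R_ε^K`
such that every factor of a word of `H` of length `> k` has nonempty images
under both components of the bimorphism. -/
theorem stmt0 {A S : Type} [Fintype A] [Semigroup S] (f : A → S)
    (hgen : Subsemigroup.closure (Set.range f) = ⊤)
    (L : Language A) (hLreg : L.IsRegular) (hLne : ∀ w ∈ L, w ≠ [])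
    (hLdict : ∀ s : S, ∃ w ∈ L, evalW f w = (s : WithOne S))
    (hLrat : IsRationalRel
      {uv : List A × List A | uv.1 ∈ L ∧ uv.2 ∈ L ∧ evalW f uv.1 = evalW f uv.2}) :
    ∃ (k : ℕ) (K : Language A), K ≤ L ∧ K.IsRegular ∧
      (∀ s : S, ∃ w ∈ K, evalW f w = (s : WithOne S)) ∧
      ∃ (B : Type) (_ : Fintype B) (H : Language B), H.IsRegular ∧
        ∃ α β : B → List A, NivatPair α β ∧
          {uv : List A × List A | ∃ w ∈ H, uv = (strMap α w, strMap β w)} =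
            {uv : List A × List A | uv.1 ∈ K ∧ uv.2 ∈ K ∧ evalW f uv.1 = evalW f uv.2} ∧
          ∀ x g s : List B, x ++ g ++ s ∈ H → g.length > k →
            strMap α g ≠ [] ∧ strMap β g ≠ [] :=
  stmt0_general f L hLreg hLdict hLrat
end

section
/- Let A be a finite alphabet, S a semigroup generated by the images of A, K ⊆ A⁺ a rational dictionary of S, B a finite alphabet, H ⊆ B* a regular language, (α, β) a Nivat bimorphism from B* to A* with {(α(w), β(w)) : w ∈ H} = R_ε^K = {(u,v) ∈ K × K : p(u) = p(v)}, and k ∈ ℕ such that for all x, f, s ∈ B* with x·f·s ∈ H and |f| > k one has α(f) ≠ ε and β(f) ≠ ε. Then there exists ℓ ∈ ℕ such that for all (u, v) ∈ R_ε^K, |u| ≤ ℓ·|v|. -/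
/-- If the relation `R_ε^K` of a rational dictionary `K` of a
semigroup `S` is realized by a Nivat bimorphism on a regular language `H` in
which every factor of length `> k` has nonempty images under both components,
then there is `ℓ` with `|u| ≤ ℓ·|v|` for all `(u, v) ∈ R_ε^K`. -/
theorem stmt1 {A B S : Type} [Fintype A] [Fintype B] [Semigroup S] (f : A → S)
    (hgen : Subsemigroup.closure (Set.range f) = ⊤)
    (K : Language A) (hKreg : K.IsRegular) (hKne : ∀ w ∈ K, w ≠ [])
    (hKdict : ∀ s : S, ∃ w ∈ K, evalW f w = (s : WithOne S))
    (H : Language B) (hHreg : H.IsRegular)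
    (α β : B → List A) (hNivat : NivatPair α β)
    (hrel : {uv : List A × List A | ∃ w ∈ H, uv = (strMap α w, strMap β w)} =
      {uv : List A × List A | uv.1 ∈ K ∧ uv.2 ∈ K ∧ evalW f uv.1 = evalW f uv.2})
    (k : ℕ)
    (hfac : ∀ x g s : List B, x ++ g ++ s ∈ H → g.length > k →
      strMap α g ≠ [] ∧ strMap β g ≠ []) :
    ∃ ℓ : ℕ, ∀ u ∈ K, ∀ v ∈ K, evalW f u = evalW f v →
      u.length ≤ ℓ * v.length := by
  -- key lemma: every word whose extensions are in H satisfies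
  -- |w| ≤ (k+1) * |β(w)| + k
  have hβapp : ∀ g s : List B, strMap β (g ++ s) = strMap β g ++ strMap β s := by
    intro g s; simp [strMap]
  have key : ∀ n : ℕ, ∀ w x : List B, w.length ≤ n → (x ++ w) ∈ H →
      w.length ≤ (k + 1) * (strMap β w).length + k := by
    intro n
    induction n with
    | zero => intro w x hw _; omega
    | succ n ih =>
      intro w x hw hmem
      by_cases hk : w.length ≤ k
      · omega
      · have hlen : k + 1 ≤ w.length := by omega
        set g := w.take (k + 1) with hg
        set s := w.drop (k + 1) with hs
        have hgs : w = g ++ s := (List.take_append_drop _ _).symm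
        have hglen : g.length = k + 1 := by
          simp [hg, List.length_take]; omega
        have hmem' : x ++ g ++ s ∈ H := by
          rwa [List.append_assoc, ← hgs]
        have hβg := (hfac x g s hmem' (by omega)).2
        have hβg1 : 1 ≤ (strMap β g).length := List.length_pos_iff.mpr hβg
        have hslen : s.length ≤ n := by
          rw [hs, List.length_drop]; omega
        have := ih s (x ++ g) hslen hmem'
        have hwlen : w.length = g.length + s.length := by
          rw [hgs]; simp
        have hβw : (strMap β w).length =
            (strMap β g).length + (strMap β s).length := by
          rw [hgs, hβapp]; simp
        nlinarith
  refine ⟨2 * k + 1, ?_⟩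
  intro u hu v hv heq
  have : (u, v) ∈ {uv : List A × List A | ∃ w ∈ H,
      uv = (strMap α w, strMap β w)} := by
    rw [hrel]; exact ⟨hu, hv, heq⟩
  obtain ⟨w, hwH, hweq⟩ := this
  have hu' : u = strMap α w := by simpa using congrArg Prod.fst hweq
  have hv' : v = strMap β w := by simpa using congrArg Prod.snd hweq
  have hαle : (strMap α w).length ≤ w.length := by
    simp only [strMap, List.length_flatten, List.map_map]
    calc ((w.map (List.length ∘ α)).sum)
        ≤ (w.map (fun _ => 1)).sum := by
          apply List.sum_le_sum
          intro b hb
          rcases hNivat b with ⟨h1, _⟩ | ⟨h1, _⟩ <;> simp [h1]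
      _ = w.length := by simp
  have hwbd := key w.length w [] le_rfl (by simpa using hwH)
  have hv1 : 1 ≤ v.length := by
    have := hKne v hv
    exact List.length_pos_iff.mpr this
  rw [hu', ← hv'] at *
  nlinarith
end

section
/- Let A be a finite alphabet, S a semigroup generated by the images of A, and L ⊆ A⁺ a rational (regular) dictionary of S such that the relation R_ε^L = {(u,v) ∈ L × L : p(u) = p(v)} is rational. Then there exist a rational dictionary K ⊆ L of S and ℓ ∈ ℕ such that for all u, v ∈ K with p(u) = p(v), |u| ≤ ℓ·|v|. -/
/-!
Write `R_ε^L` as `{(α w, β w) | w ∈ H}` with `H` recognised by a DFA with `n` states. If `w ∈ H`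
contains `n` consecutive letters on which `β` is empty, the DFA loops inside that block; deleting
the loop keeps `w` in `H` and `β w` unchanged, so `α w` has a strictly shorter equivalent word in
`L`. Removing from `L` the image `P` under `α` of all such `w` therefore keeps a dictionary (a
shortest representative of each element survives). `P` is regular: "contains such a block" is
recognised by a counter automaton, and the letter-to-letter-or-empty morphism `α` maps regular
languages to regular languages. For the remaining pairs every `β`-empty block has length `< n`,
and there are at most `|β w| + 1` blocks, so `|α w| ≤ 2n |β w|`.
-/

theorem exists_mem_notMem_of_exists_shorter {A X : Type} (e : List A → X) {L P : Set (List A)}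
    (hP : ∀ u ∈ P, ∃ u' ∈ L, e u' = e u ∧ u'.length < u.length) :
    ∀ u ∈ L, ∃ u' ∈ L, u' ∉ P ∧ e u' = e u := by
  intro u hu
  induction hlen : u.length using Nat.strong_induction_on generalizing u with
  | _ n ih =>
    by_cases huP : u ∈ P
    · obtain ⟨u', hu', he, hlt⟩ := hP u huP
      obtain ⟨u'', hu'', hu''P, he'⟩ := ih _ (hlen ▸ hlt) u' hu' rfl
      exact ⟨u'', hu'', hu''P, he'.trans he⟩
    · exact ⟨u, hu, huP, rfl⟩

namespace DFA

variable {T U σ : Type}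

theorem exists_deletable_infix [Fintype σ] (M : DFA T σ) {x y z : List T}
    (hw : x ++ y ++ z ∈ M.accepts) (hy : Fintype.card σ ≤ y.length) :
    ∃ a b c, y = a ++ b ++ c ∧ b ≠ [] ∧ x ++ (a ++ c) ++ z ∈ M.accepts := by
  obtain ⟨q, a, b, c, rfl, -, hb, ha, hloop, -⟩ := M.evalFrom_split (s := M.eval x) hy rfl
  refine ⟨a, b, c, rfl, hb, ?_⟩
  simp only [mem_accepts, eval, evalFrom_of_append] at hw ha ⊢
  rw [ha, hloop] at hw
  rwa [ha]

def imageεNFA (M : DFA T σ) (g : T → Option U) : εNFA U σ where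
  step s o := {t | ∃ b, g b = o ∧ M.step s b = t}
  start := {M.start}
  accept := M.accept

theorem imageεNFA_isPath (M : DFA T σ) (g : T → Option U) {s t : σ} {o : List (Option U)} :
    (M.imageεNFA g).IsPath s t o ↔ ∃ w, w.map g = o ∧ M.evalFrom s w = t := by
  induction o generalizing s with
  | nil => simp [eq_comm]
  | cons a o ih =>
    rw [← List.singleton_append, εNFA.isPath_append]
    simp only [εNFA.isPath_singleton, ih]
    constructor
    · rintro ⟨_, ⟨b, hb, rfl⟩, w, hw, rfl⟩
      exact ⟨b :: w, by simp [hb, hw], rfl⟩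
    · rintro ⟨_ | ⟨b, w⟩, hw, rfl⟩
      · simp at hw
      · simp only [List.map_cons, List.singleton_append, List.cons.injEq] at hw
        exact ⟨_, ⟨b, hw.1, rfl⟩, w, hw.2, rfl⟩

theorem imageεNFA_accepts (M : DFA T σ) (g : T → Option U) :
    (M.imageεNFA g).accepts = List.filterMap g '' M.accepts := by
  ext u
  simp only [εNFA.mem_accepts_iff_exists_path, imageεNFA_isPath]
  constructor
  · rintro ⟨_, t, _, rfl, ht, rfl, w, rfl, rfl⟩
    exact ⟨w, ht, by simp [List.reduceOption, List.filterMap_map]⟩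
  · rintro ⟨w, hw, rfl⟩
    exact ⟨_, _, _, rfl, hw, by simp [List.reduceOption, List.filterMap_map], w, rfl, rfl⟩

end DFA

theorem Language.IsRegular.image_filterMap {T U : Type} {L : Language T} (h : L.IsRegular)
    (g : T → Option U) : Language.IsRegular (T := U) (List.filterMap g '' L) := by
  classical
  obtain ⟨σ, _, M, rfl⟩ := h
  exact ⟨Set σ, inferInstance, (M.imageεNFA g).toNFA.toDFA, by
    rw [NFA.toDFA_correct, εNFA.toNFA_correct, DFA.imageεNFA_accepts]⟩

def blockCounter {T : Type} (p : T → Bool) (k : ℕ) : DFA T (Fin (k + 1)) where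
  step s b := if s = Fin.last k then Fin.last k else if p b then s + 1 else 0
  start := 0
  accept := {Fin.last k}

namespace blockCounter

variable {T : Type} (p : T → Bool) (k : ℕ)

theorem step_last (b : T) : (blockCounter p k).step (Fin.last k) b = Fin.last k := if_pos rfl

theorem val_step {s : Fin (k + 1)} (hs : s ≠ Fin.last k) (b : T) :
    ((blockCounter p k).step s b : ℕ) = if p b then s.val + 1 else 0 := by
  simp only [blockCounter, if_neg hs]
  split_ifs
  · exact Fin.val_add_one_of_lt (Fin.lt_last_iff_ne_last.mpr hs)
  · rfl

theorem exists_infix_length_eq_eval (w : List T) :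
    ∃ x y z, w = x ++ y ++ z ∧ (∀ b ∈ y, p b) ∧ y.length = (blockCounter p k).eval w ∧
      ((blockCounter p k).eval w ≠ Fin.last k → z = []) := by
  induction w using List.reverseRecOn with
  | nil => exact ⟨[], [], [], rfl, by simp, rfl, fun _ => rfl⟩
  | append_singleton w b ih =>
    obtain ⟨x, y, z, rfl, hy, hlen, hz⟩ := ih
    rw [DFA.eval_append_singleton]
    by_cases hlast : (blockCounter p k).eval (x ++ y ++ z) = Fin.last k
    · rw [hlast] at hlen
      rw [hlast, step_last]
      exact ⟨x, y, z ++ [b], by simp, hy, hlen, by simp⟩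
    · obtain rfl := hz hlast
      have hval := val_step p k hlast b
      by_cases hb : p b
      · refine ⟨x, y ++ [b], [], by simp, by simpa [or_imp, forall_and, hb] using hy, ?_,
          fun _ => rfl⟩
        rw [hval, if_pos hb, List.length_append, hlen, List.length_singleton]
      · refine ⟨x ++ y ++ [b], [], [], by simp, by simp, ?_, fun _ => rfl⟩
        rw [hval, if_neg hb, List.length_nil]

theorem exists_block_of_eval_eq_last {w : List T} (h : (blockCounter p k).eval w = Fin.last k) :
    ∃ x y z, w = x ++ y ++ z ∧ y.length = k ∧ ∀ b ∈ y, p b := by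
  obtain ⟨x, y, z, hw, hy, hlen, -⟩ := exists_infix_length_eq_eval p k w
  exact ⟨x, y, z, hw, by rw [hlen, h, Fin.val_last], hy⟩

theorem countP_le_of_eval_ne_last {w : List T} (h : (blockCounter p k).eval w ≠ Fin.last k) :
    w.countP p ≤ k * w.countP (fun b => !p b) + (blockCounter p k).eval w := by
  induction w using List.reverseRecOn with
  | nil => simp
  | append_singleton w b ih =>
    rw [DFA.eval_append_singleton] at h ⊢
    have hw : (blockCounter p k).eval w ≠ Fin.last k := fun hw => h (by rw [hw, step_last])
    have hle := Fin.is_le ((blockCounter p k).eval w)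
    specialize ih hw
    rw [val_step p k hw, List.countP_append, List.countP_append]
    cases hb : p b
    · simp only [hb, List.countP_singleton, Bool.not_false, if_true, Bool.false_eq_true, if_false]
      nlinarith
    · simp only [hb, List.countP_singleton, Bool.not_true, if_true, Bool.false_eq_true, if_false,
        add_zero]
      omega

end blockCounter

namespace NivatPair

variable {A B : Type} {α β : B → List A}

theorem strMap_left_eq_filterMap (hN : NivatPair α β) (w : List B) :
    strMap α w = w.filterMap fun b => (α b).head? := by
  induction w with
  | nil => rfl
  | cons b w ih =>
    obtain ⟨hα, -⟩ | ⟨hα, -⟩ := hN b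
    · simpa [strMap, hα] using ih
    · obtain ⟨a, ha⟩ := List.length_eq_one_iff.mp hα
      simpa [strMap, ha] using ih

theorem length_strMap_left (hN : NivatPair α β) (w : List B) :
    (strMap α w).length = w.countP fun b => (β b).isEmpty := by
  induction w with
  | nil => rfl
  | cons b w ih =>
    obtain ⟨hα, hβ⟩ | ⟨hα, hβ⟩ := hN b
    · simpa [strMap, hα, List.ne_nil_of_length_eq_add_one hβ] using ih
    · simp [strMap, hα, hβ] at ih ⊢
      omega

theorem length_strMap_right_s3 (hN : NivatPair α β) (w : List B) :
    (strMap β w).length = w.countP fun b => !(β b).isEmpty := by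
  induction w with
  | nil => rfl
  | cons b w ih =>
    obtain ⟨hα, hβ⟩ | ⟨hα, hβ⟩ := hN b
    · simp [strMap, hβ, List.ne_nil_of_length_eq_add_one hβ] at ih ⊢
      omega
    · simpa [strMap, hβ] using ih

theorem exists_mem_accepts_shorter_left {σ : Type} [Fintype σ] (hN : NivatPair α β)
    (M : DFA B σ) {w : List B} (hw : w ∈ M.accepts)
    (hblock : (blockCounter (fun b => (β b).isEmpty) (Fintype.card σ)).eval w = Fin.last _) :
    ∃ w' ∈ M.accepts, strMap β w' = strMap β w ∧ (strMap α w').length < (strMap α w).length := by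
  obtain ⟨x, y, z, rfl, hlen, hy⟩ := blockCounter.exists_block_of_eval_eq_last _ _ hblock
  obtain ⟨a, b, c, rfl, hb, hw'⟩ := M.exists_deletable_infix hw hlen.ge
  have hbβ : ∀ d ∈ b, (β d).isEmpty := fun d hd => hy d (by simp [hd])
  refine ⟨_, hw', ?_, ?_⟩
  · simpa [strMap] using hbβ
  · rw [hN.length_strMap_left, hN.length_strMap_left]
    simp only [List.countP_append, List.countP_eq_length.mpr hbβ]
    have := List.length_pos_iff.mpr hb
    omega

theorem length_strMap_left_le (hN : NivatPair α β) {k : ℕ} {w : List B}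
    (h : (blockCounter (fun b => (β b).isEmpty) k).eval w ≠ Fin.last k)
    (hβ : strMap β w ≠ []) : (strMap α w).length ≤ 2 * k * (strMap β w).length := by
  have hcount := blockCounter.countP_le_of_eval_ne_last _ _ h
  have hle := Fin.is_le ((blockCounter (fun b => (β b).isEmpty) k).eval w)
  have hpos := List.length_pos_iff.mpr hβ
  rw [hN.length_strMap_right_s3] at hpos
  rw [hN.length_strMap_left, hN.length_strMap_right_s3]
  nlinarith

end NivatPair

theorem stmt3_general {A S : Type} [Semigroup S] (f : A → S)
    (L : Language A) (hLreg : L.IsRegular) (hLne : ∀ w ∈ L, w ≠ [])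
    (hLdict : ∀ s : S, ∃ w ∈ L, evalW f w = (s : WithOne S))
    (hLrat : IsRationalRel
      {uv : List A × List A | uv.1 ∈ L ∧ uv.2 ∈ L ∧ evalW f uv.1 = evalW f uv.2}) :
    ∃ (K : Language A) (ℓ : ℕ), K ≤ L ∧ K.IsRegular ∧
      (∀ s : S, ∃ w ∈ K, evalW f w = (s : WithOne S)) ∧
      ∀ u ∈ K, ∀ v ∈ K, evalW f u = evalW f v → u.length ≤ ℓ * v.length := by
  obtain ⟨B, _, H, ⟨σ, _, M, rfl⟩, α, β, hN, hR⟩ := hLrat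
  have hRel : ∀ u v, (u ∈ L ∧ v ∈ L ∧ evalW f u = evalW f v) ↔
      ∃ w ∈ M.accepts, u = strMap α w ∧ v = strMap β w := fun u v => by
    simpa [Prod.ext_iff] using Set.ext_iff.mp hR (u, v)
  set D := blockCounter (fun b => (β b).isEmpty) (Fintype.card σ)
  set P : Language A := strMap α '' (M.accepts ⊓ D.accepts)
  have hPreg : P.IsRegular := by
    have h := (Language.IsRegular.inf ⟨σ, inferInstance, M, rfl⟩
      ⟨_, inferInstance, D, rfl⟩).image_filterMap fun b => (α b).head?
    rwa [← funext hN.strMap_left_eq_filterMap] at h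
  have hshrink : ∀ u ∈ P, ∃ u' ∈ L, evalW f u' = evalW f u ∧ u'.length < u.length := by
    rintro _ ⟨w, ⟨hw, hD⟩, rfl⟩
    obtain ⟨w', hw', hβ, hlt⟩ := hN.exists_mem_accepts_shorter_left M hw hD
    obtain ⟨hu', -, he'⟩ := (hRel _ _).2 ⟨w', hw', rfl, rfl⟩
    obtain ⟨-, -, he⟩ := (hRel _ _).2 ⟨w, hw, rfl, rfl⟩
    exact ⟨_, hu', by rw [he', hβ, he], hlt⟩
  refine ⟨L ⊓ Pᶜ, 2 * Fintype.card σ, inf_le_left, hLreg.inf hPreg.compl, fun s => ?_, ?_⟩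
  · obtain ⟨u, hu, hus⟩ := hLdict s
    obtain ⟨u', hu', hu'P, he⟩ := exists_mem_notMem_of_exists_shorter _ hshrink u hu
    exact ⟨u', ⟨hu', hu'P⟩, he.trans hus⟩
  · rintro u ⟨hu, huP⟩ v ⟨hv, -⟩ he
    obtain ⟨w, hw, rfl, rfl⟩ := (hRel u v).1 ⟨hu, hv, he⟩
    exact hN.length_strMap_left_le (fun hD => huP ⟨w, ⟨hw, hD⟩, rfl⟩) (hLne _ hv)

/-- If `L` is a rational dictionary of a semigroup `S` whose
relation `R_ε^L` is rational, then there are a rational dictionary `K ⊆ L` and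
`ℓ ∈ ℕ` such that `|u| ≤ ℓ·|v|` for all `u, v ∈ K` with `p(u) = p(v)`. -/
theorem stmt3 {A S : Type} [Fintype A] [Semigroup S] (f : A → S)
    (hgen : Subsemigroup.closure (Set.range f) = ⊤)
    (L : Language A) (hLreg : L.IsRegular) (hLne : ∀ w ∈ L, w ≠ [])
    (hLdict : ∀ s : S, ∃ w ∈ L, evalW f w = (s : WithOne S))
    (hLrat : IsRationalRel
      {uv : List A × List A | uv.1 ∈ L ∧ uv.2 ∈ L ∧ evalW f uv.1 = evalW f uv.2}) :
    ∃ (K : Language A) (ℓ : ℕ), K ≤ L ∧ K.IsRegular ∧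
      (∀ s : S, ∃ w ∈ K, evalW f w = (s : WithOne S)) ∧
      ∀ u ∈ K, ∀ v ∈ K, evalW f u = evalW f v → u.length ≤ ℓ * v.length :=
  stmt3_general f L hLreg hLne hLdict hLrat
end

section
/- Let G be a group, A a finite alphabet with an evaluation p : A⁺ → G whose letter images generate G and which is symmetric (for each a ∈ A there is a' ∈ A with p(a') = p(a)⁻¹), and let L ⊆ A⁺ be a dictionary for G. If L is weakly Lipschitz, then L is Lipschitz Hausdorff. -/
/-- Evaluation of a word over `A` in the group `G`. -/
def evalG {A G : Type} [Group G] (f : A → G) (w : List A) : G :=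
  (w.map f).prod

/-- The norm `|g|_G` of `g`: the least length of a word over `A` evaluating to `g`. -/
noncomputable def gnorm {A G : Type} [Group G] (f : A → G) (g : G) : ℕ :=
  sInf {n | ∃ w : List A, evalG f w = g ∧ w.length = n}

/-- The distance in the Cayley graph of `G`. -/
noncomputable def gdist {A G : Type} [Group G] (f : A → G) (g h : G) : ℕ :=
  gnorm f (g⁻¹ * h)

/-- A language `L` is Lipschitz Hausdorff if, uniformly, whenever `u, v ∈ L`
represent elements at distance at most `1`, every prefix of `u` is at bounded
distance from some prefix of `v`. -/
def LipschitzHausdorff {A G : Type} [Group G] (f : A → G) (L : Language A) : Prop :=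
  ∃ k : ℕ, ∀ u ∈ L, ∀ v ∈ L, gdist f (evalG f u) (evalG f v) ≤ 1 →
    ∀ x : List A, x <+: u → ∃ y : List A, y <+: v ∧ gdist f (evalG f x) (evalG f y) ≤ k

/-- `D` is a departure function for `K` if any factor `y` of a word of `K`
with `|y| > D(n)` satisfies `|p(y)|_G ≥ n`. -/
def HasDepartureFunction {A G : Type} [Group G] (f : A → G) (K : Language A) : Prop :=
  ∃ D : ℕ → ℕ, ∀ n : ℕ, ∀ x y z : List A, x ++ y ++ z ∈ K → y.length > D n →
    n ≤ gnorm f (evalG f y)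

/-- A language `L` is weakly Lipschitz if, uniformly, whenever `u, v ∈ L`
represent elements at distance at most `1`, they can be padded (with empty
letters) to words of a common length whose corresponding prefixes stay at
bounded distance. -/
def WeaklyLipschitz {A G : Type} [Group G] (f : A → G) (L : Language A) : Prop :=
  ∃ k : ℕ, ∀ u ∈ L, ∀ v ∈ L, gdist f (evalG f u) (evalG f v) ≤ 1 →
    ∃ as bs : List (Option A), as.length = bs.length ∧
      as.reduceOption = u ∧ bs.reduceOption = v ∧
      ∀ i ≤ as.length,
        gdist f (evalG f (as.take i).reduceOption) (evalG f (bs.take i).reduceOption) ≤ k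


lemma take_reduceOption_exists {A : Type} :
    ∀ (as : List (Option A)) (x : List A), x <+: as.reduceOption →
      ∃ i ≤ as.length, (as.take i).reduceOption = x := by
  intro as
  induction as with
  | nil =>
    intro x hx
    simp only [List.reduceOption_nil, List.prefix_nil] at hx
    exact ⟨0, Nat.zero_le _, by simp [hx]⟩
  | cons a t ih =>
    intro x hx
    cases a with
    | none =>
      simp only [List.reduceOption_cons_of_none] at hx
      obtain ⟨i, hi, hix⟩ := ih x hx
      exact ⟨i + 1, by simpa using Nat.succ_le_succ hi, by simpa using hix⟩
    | some c =>
      simp only [List.reduceOption_cons_of_some] at hx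
      cases x with
      | nil => exact ⟨0, Nat.zero_le _, by simp⟩
      | cons d x' =>
        rw [List.cons_prefix_cons] at hx
        obtain ⟨rfl, hx'⟩ := hx
        obtain ⟨i, hi, hix⟩ := ih x' hx'
        exact ⟨i + 1, by simpa using Nat.succ_le_succ hi, by simp [hix]⟩

lemma reduceOption_prefix_mono {A : Type} {l1 l2 : List (Option A)} (h : l1 <+: l2) :
    l1.reduceOption <+: l2.reduceOption := by
  obtain ⟨t, rfl⟩ := h
  exact ⟨t.reduceOption, (List.reduceOption_append _ _).symm⟩

/-- A weakly Lipschitz dictionary for a group is Lipschitz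
Hausdorff. -/
theorem stmt5 {A G : Type} [Fintype A] [Group G] (f : A → G)
    (hgen : Subgroup.closure (Set.range f) = ⊤)
    (hsym : ∀ a : A, ∃ a' : A, f a' = (f a)⁻¹)
    (L : Language A) (hLreg : L.IsRegular) (hLne : ∀ w ∈ L, w ≠ [])
    (hLdict : ∀ g : G, ∃ w ∈ L, evalG f w = g)
    (hWL : WeaklyLipschitz f L) :
    LipschitzHausdorff f L := by
  obtain ⟨k, hk⟩ := hWL
  refine ⟨k, fun u hu v hv hd x hx => ?_⟩
  obtain ⟨as, bs, hlen, hau, hbv, hbound⟩ := hk u hu v hv hd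
  obtain ⟨i, hi, hix⟩ := take_reduceOption_exists as x (hau ▸ hx)
  refine ⟨(bs.take i).reduceOption, ?_, ?_⟩
  · exact hbv ▸ reduceOption_prefix_mono (List.take_prefix i bs)
  · have := hbound i hi
    rwa [hix] at this
end

section
/- Let A be a finite alphabet, S a semigroup generated by the images of A under the evaluation p : A⁺ → S, and K ⊆ A⁺ a language recognized by a deterministic finite automaton W with c states that is accessible and coaccessible. Suppose ℓ ∈ ℕ is such that for all u, v ∈ K with p(u) = p(v), |u| ≤ ℓ·|v|. Let x, y, z ∈ A* with x·y·z ∈ K, let q₁ be the state of W reached from the initial state after reading x and q₂ the state reached from q₁ after reading y, and let y' ∈ A* be any word with q₁·y' = q₂ and p(y') = p(y). Then |y| ≤ 2cℓ + ℓ·|y'|. -/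
lemma evalW_append {A S : Type} [Semigroup S] (f : A → S) (u v : List A) :
    evalW f (u ++ v) = evalW f u * evalW f v := by
  simp [evalW]

/-- From any witness word one can extract a short witness word. -/
lemma exists_short {A σ : Type} [Fintype σ] (W : DFA A σ) (s t : σ) (w : List A)
    (hw : W.evalFrom s w = t) :
    ∃ w', W.evalFrom s w' = t ∧ w'.length ≤ Fintype.card σ := by
  suffices H : ∀ n (w : List A), w.length ≤ n → W.evalFrom s w = t →
      ∃ w', W.evalFrom s w' = t ∧ w'.length ≤ Fintype.card σ from
    H w.length w le_rfl hw
  intro n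
  induction n with
  | zero =>
    intro w hn hw
    exact ⟨w, hw, le_trans hn (Nat.zero_le _)⟩
  | succ n ih =>
    intro w hn hw
    by_cases hlen : w.length ≤ Fintype.card σ
    · exact ⟨w, hw, hlen⟩
    · obtain ⟨q, a, b, c, hsplit, hab, hbne, ha, hb, hc⟩ :=
        W.evalFrom_split (le_of_lt (lt_of_not_ge hlen)) hw
      have hshort : (a ++ c).length ≤ n := by
        have : 0 < b.length := List.length_pos_iff.mpr hbne
        have hw' : w.length = a.length + b.length + c.length := by
          rw [hsplit]; simp [List.length_append]; omega
        simp only [List.length_append]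
        omega
      have heval : W.evalFrom s (a ++ c) = t := by
        rw [DFA.evalFrom_of_append, ha, hc]
      exact ih _ hshort heval

/-- In an accessible and coaccessible automaton with `c`
states recognizing `K`, if words of `K` representing equal elements have
comparable lengths (`|u| ≤ ℓ·|v|`), then a factor `y` read between states
`q₁, q₂` is bounded in terms of any word `y'` read between the same states and
representing the same element: `|y| ≤ 2cℓ + ℓ·|y'|`. -/
theorem stmt8 {A S : Type} [Fintype A] [Semigroup S] (f : A → S)
    (hgen : Subsemigroup.closure (Set.range f) = ⊤)
    {σ : Type} [Fintype σ] (W : DFA A σ) (K : Language A)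
    (hacc : W.accepts = K) (hKne : ∀ w ∈ K, w ≠ [])
    (haccessible : ∀ q : σ, ∃ w : List A, W.eval w = q)
    (hcoaccessible : ∀ q : σ, ∃ w : List A, W.evalFrom q w ∈ W.accept)
    (c : ℕ) (hc : c = Fintype.card σ)
    (ℓ : ℕ)
    (hl : ∀ u ∈ K, ∀ v ∈ K, evalW f u = evalW f v → u.length ≤ ℓ * v.length)
    (x y z : List A) (hxyz : x ++ y ++ z ∈ K)
    (q₁ q₂ : σ) (hq₁ : W.eval x = q₁) (hq₂ : W.evalFrom q₁ y = q₂)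
    (y' : List A) (hy' : W.evalFrom q₁ y' = q₂)
    (hpy : evalW f y' = evalW f y) :
    y.length ≤ 2 * c * ℓ + ℓ * y'.length := by
  -- short word reaching q₁
  obtain ⟨x₀, hx₀⟩ := haccessible q₁
  obtain ⟨x', hx', hx'len⟩ := exists_short W W.start q₁ x₀ hx₀
  -- short word from q₂ to an accept state
  obtain ⟨w₀, hw₀⟩ := hcoaccessible q₂
  obtain ⟨w', hw', hw'len⟩ := exists_short W q₂ (W.evalFrom q₂ w₀) w₀ rfl
  have hw'acc : W.evalFrom q₂ w' ∈ W.accept := by rw [hw']; exact hw₀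
  -- membership of both words in K
  have hmemy : x' ++ y ++ w' ∈ K := by
    rw [← hacc, DFA.mem_accepts]
    show W.evalFrom W.start _ ∈ W.accept
    rw [DFA.evalFrom_of_append, DFA.evalFrom_of_append, hx', hq₂]
    exact hw'acc
  have hmemy' : x' ++ y' ++ w' ∈ K := by
    rw [← hacc, DFA.mem_accepts]
    show W.evalFrom W.start _ ∈ W.accept
    rw [DFA.evalFrom_of_append, DFA.evalFrom_of_append, hx', hy']
    exact hw'acc
  have heval : evalW f (x' ++ y ++ w') = evalW f (x' ++ y' ++ w') := by
    rw [evalW_append, evalW_append, evalW_append, evalW_append, hpy]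
  have := hl _ hmemy _ hmemy' heval
  simp only [List.length_append] at this
  have h1 : ℓ * (x'.length + y'.length + w'.length)
      = ℓ * x'.length + ℓ * y'.length + ℓ * w'.length := by ring
  nlinarith [hx'len, hw'len, hc.ge, hc.le, Nat.zero_le ℓ]
end

section
/- Let G be a group, A a finite alphabet with an evaluation p : A⁺ → G whose letter images generate G, and K ⊆ A⁺ a rational dictionary for G such that there exists ℓ ∈ ℕ with |u| ≤ ℓ·|v| for all u, v ∈ K satisfying p(u) = p(v). Then K admits a departure function, i.e., there exists D : ℕ → ℕ such that for all n ∈ ℕ and all x, y, z ∈ A* with x·y·z ∈ K and |y| > D(n), every word w ∈ A* with p(w) = p(y) has |w| ≥ n. -/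
lemma evalG_append {A G : Type} [Group G] (f : A → G) (a b : List A) :
    evalG f (a ++ b) = evalG f a * evalG f b := by
  simp [evalG]

lemma dfa_shorten {A σ : Type} [Fintype σ] (M : DFA A σ) (s : σ) (w : List A) :
    ∃ w' : List A, M.evalFrom s w' = M.evalFrom s w ∧ w'.length ≤ Fintype.card σ := by
  obtain ⟨n, hn⟩ : ∃ n, w.length ≤ n := ⟨w.length, le_rfl⟩
  induction n generalizing w with
  | zero => exact ⟨w, rfl, hn.trans (Nat.zero_le _)⟩
  | succ n ih =>
    by_cases h : w.length ≤ Fintype.card σ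
    · exact ⟨w, rfl, h⟩
    · obtain ⟨q, a, b, c, hx, hlen, hnil, ha, hb, hc⟩ :=
        M.evalFrom_split (le_of_lt (lt_of_not_ge h)) rfl
      have hlt : (a ++ c).length < w.length := by
        subst hx
        simp only [List.length_append]
        have := List.length_pos_iff.mpr hnil
        omega
      obtain ⟨w', hw', hw'len⟩ := ih (a ++ c) (by omega)
      refine ⟨w', ?_, hw'len⟩
      rw [hw', DFA.evalFrom_of_append, ha, hc]

/-- A rational dictionary `K` for a group `G` in which words
representing the same element have comparable lengths (`|u| ≤ ℓ·|v|`) admits a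
departure function. -/
theorem stmt9 {A G : Type} [Fintype A] [Group G] (f : A → G)
    (hgen : Subgroup.closure (Set.range f) = ⊤)
    (K : Language A) (hKreg : K.IsRegular) (hKne : ∀ w ∈ K, w ≠ [])
    (hKdict : ∀ g : G, ∃ w ∈ K, evalG f w = g)
    (ℓ : ℕ)
    (hl : ∀ u ∈ K, ∀ v ∈ K, evalG f u = evalG f v → u.length ≤ ℓ * v.length) :
    ∃ D : ℕ → ℕ, ∀ n : ℕ, ∀ x y z : List A, x ++ y ++ z ∈ K → y.length > D n →
      ∀ w : List A, evalG f w = evalG f y → n ≤ w.length := by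
  obtain ⟨σ, instσ, M, hM⟩ := hKreg
  choose r hrK hrE using hKdict
  set c := Fintype.card σ with hc
  refine ⟨fun n => ℓ * sSup ((fun w : List A => (r (evalG f w)).length) ''
      {w : List A | w.length ≤ n + 2 * c}), ?_⟩
  intro n x y z hxyz hy w hw
  by_contra hwn
  push_neg at hwn
  obtain ⟨x', hx', hx'len⟩ := dfa_shorten M M.start x
  obtain ⟨z', hz', hz'len⟩ := dfa_shorten M (M.evalFrom (M.evalFrom M.start x) y) z
  have hmem : x' ++ y ++ z' ∈ K := by
    rw [← hM] at hxyz ⊢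
    rw [DFA.mem_accepts] at hxyz ⊢
    simpa [DFA.eval, DFA.evalFrom_of_append, hx', hz'] using hxyz
  have heval : evalG f (x' ++ w ++ z') = evalG f (x' ++ y ++ z') := by
    simp [evalG_append, hw]
  set u := r (evalG f (x' ++ w ++ z')) with hu
  have huK : u ∈ K := hrK _
  have huE : evalG f u = evalG f (x' ++ y ++ z') := by rw [hu, hrE, heval]
  have hlen1 : (x' ++ y ++ z').length ≤ ℓ * u.length := hl _ hmem u huK huE.symm
  have hSfin : ((fun w : List A => (r (evalG f w)).length) ''
      {w : List A | w.length ≤ n + 2 * c}).Finite :=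
    (List.finite_length_le A (n + 2 * c)).image _
  have hmem2 : u.length ∈ (fun w : List A => (r (evalG f w)).length) ''
      {w : List A | w.length ≤ n + 2 * c} := by
    refine ⟨x' ++ w ++ z', ?_, rfl⟩
    simp only [Set.mem_setOf_eq, List.length_append]
    omega
  have hle : u.length ≤ sSup ((fun w : List A => (r (evalG f w)).length) ''
      {w : List A | w.length ≤ n + 2 * c}) := le_csSup hSfin.bddAbove hmem2
  have : y.length ≤ ℓ * sSup ((fun w : List A => (r (evalG f w)).length) ''
      {w : List A | w.length ≤ n + 2 * c}) := by
    have h2 : y.length ≤ (x' ++ y ++ z').length := by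
      simp only [List.length_append]; omega
    exact h2.trans (hlen1.trans (Nat.mul_le_mul_left ℓ hle))
  exact absurd this (Nat.not_le.mpr hy)
end
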